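/- The function g defined by g(x) = −x − γ/ln 2 + 1/2 − ∑_{m=−∞}^{0} exp(−2^{x−m}) + ∑_{m=1}^{∞} (1 − exp(−2^{x−m})) satisfies g(x+1) = g(x) for every real x. -/

import Mathlib

/-!
Replacing `x` by `x + 1` shifts both sums by one index: the first loses its term `exp (-2 ^ x)`
and the second gains the term `1 - exp (-2 ^ x)`. Together they contribute `+1`, which cancels
the change of the linear term `-x`. Both series converge because their terms are dominated by
`2 ^ (c - j)`, using `exp (-y) ≤ 1 / y` and `1 - exp (-y) ≤ y` for `y > 0`.
-/

open Real

/-- The periodic function `g`: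
`g(x) = -x - γ/ln 2 + 1/2 - ∑_{m=-∞}^{0} exp(-2^{x-m}) + ∑_{m=1}^{∞} (1 - exp(-2^{x-m}))`,
the first sum reindexed by `m = -j` and the second by `m = j+1`, `j : ℕ`. -/
noncomputable def g (x : ℝ) : ℝ :=
  -x - Real.eulerMascheroniConstant / Real.log 2 + 1 / 2
    - ∑' j : ℕ, Real.exp (-(2 : ℝ) ^ (x + j))
    + ∑' j : ℕ, (1 - Real.exp (-(2 : ℝ) ^ (x - (j + 1))))

section Shift

variable {E : Type*} [AddCommGroup E] [TopologicalSpace E] [IsTopologicalAddGroup E] [T2Space E]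
  {f : ℝ → E}

theorem tsum_comp_add_natCast (x : ℝ) (hf : Summable fun j : ℕ => f (x + j)) :
    ∑' j : ℕ, f (x + j) = f x + ∑' j : ℕ, f (x + 1 + j) := by
  rw [hf.tsum_eq_zero_add]
  congr 1
  · simp
  · congr 1 with j
    push_cast
    ring_nf

theorem tsum_comp_sub_natCast_succ (x : ℝ) (hf : Summable fun j : ℕ => f (x + 1 - (j + 1))) :
    ∑' j : ℕ, f (x + 1 - (j + 1)) = f x + ∑' j : ℕ, f (x - (j + 1)) := by
  rw [hf.tsum_eq_zero_add]
  congr 1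
  · simp
  · congr 1 with j
    push_cast
    ring_nf

end Shift

theorem summable_two_rpow_sub_natCast (c : ℝ) : Summable fun j : ℕ => (2 : ℝ) ^ (c - j) := by
  have h : (fun j : ℕ => (2 : ℝ) ^ (c - j)) = fun j : ℕ => 2 ^ c * (1 / 2) ^ j := by
    ext j
    rw [rpow_sub two_pos, rpow_natCast, one_div_pow, div_eq_mul_one_div]
  exact h ▸ summable_geometric_two.mul_left _

theorem exp_neg_le_inv {y : ℝ} (hy : 0 < y) : exp (-y) ≤ y⁻¹ := by
  rw [exp_neg]
  exact inv_anti₀ hy ((le_add_of_nonneg_right zero_le_one).trans (add_one_le_exp y))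

theorem summable_exp_neg_two_rpow_add (x : ℝ) :
    Summable fun j : ℕ => exp (-(2 : ℝ) ^ (x + j)) := by
  refine (summable_two_rpow_sub_natCast (-x)).of_nonneg_of_le (fun _ => (exp_pos _).le) fun j => ?_
  calc exp (-(2 : ℝ) ^ (x + j)) ≤ ((2 : ℝ) ^ (x + j))⁻¹ := exp_neg_le_inv (rpow_pos_of_pos two_pos _)
    _ = (2 : ℝ) ^ (-x - j) := by rw [← rpow_neg zero_le_two]; ring_nf

theorem summable_one_sub_exp_neg_two_rpow_sub (x : ℝ) :
    Summable fun j : ℕ => 1 - exp (-(2 : ℝ) ^ (x - (j + 1))) := by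
  refine (summable_two_rpow_sub_natCast (x - 1)).of_nonneg_of_le (fun j => ?_) fun j => ?_
  · simp [(rpow_pos_of_pos two_pos _).le]
  · calc 1 - exp (-(2 : ℝ) ^ (x - (j + 1))) ≤ (2 : ℝ) ^ (x - (j + 1)) := by
          linarith [add_one_le_exp (-(2 : ℝ) ^ (x - (j + 1)))]
      _ = (2 : ℝ) ^ (x - 1 - j) := by ring_nf

theorem g_periodic (x : ℝ) : g (x + 1) = g x := by
  unfold g
  rw [tsum_comp_add_natCast (f := fun y => exp (-(2 : ℝ) ^ y)) x (summable_exp_neg_two_rpow_add x),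
    tsum_comp_sub_natCast_succ (f := fun y => 1 - exp (-(2 : ℝ) ^ y)) x
      (summable_one_sub_exp_neg_two_rpow_sub (x + 1))]
  ring
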